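/- arXiv:2505.06839 — 4 statements merged into one kernel-verified Lean document; each statement's English description precedes it below -/
import Mathlib

section
/- There exist universal constants C, c > 0 such that the following holds for all integers k ≤ m and d ≥ C·k·log m. There exist vectors v_1,…,v_m ∈ ℝ^d such that, defining v_S = Σ_{i∈S} v_i for each k-element subset S of {1,…,m}, the following two conditions hold: (Boundedness) for every k-element subset S, ‖v_S‖² ≤ 1; (Separation) for every pair of k-element subsets S, S', ‖v_S − v_{S'}‖² ≥ |S Δ S'|/(4k), where S Δ S' is the symmetric difference. -/
open scoped ENNReal NNReal

noncomputable section

/-- Squared Euclidean norm on `ℝ^d`. -/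
def sqNorm {d : ℕ} (v : Fin d → ℝ) : ℝ := ∑ i, (v i) ^ 2

/-!
Take `v_i = c · (ω_{1i}, …, ω_{di})` for a `d × m` matrix `ω` of signs. Then
`v_S − v_{S'} = c · ω x` with `x = 1_S − 1_{S'}`, and every row of `ω` contributes an independent
Rademacher sum `Z = ∑ x_i ω_i` to `‖ω x‖²`. Such a sum is sub-Gaussian,
`E exp (t Z) ≤ exp (t² ‖x‖² / 2)`, hence `E Z^(2k) ≤ k! (e ‖x‖²)^k`; summing the exponential series
gives `E exp (Z² / (20 ‖x‖²)) ≤ (1 − e/20)⁻¹`, and together with `E Z² = ‖x‖²` also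
`E exp (−Z² / (120 ‖x‖²)) ≤ exp (−1/120 + e²/120²)`. By the Chernoff bound,
`‖ω x‖² ∈ [7/8 · d ‖x‖², 7/2 · d ‖x‖²]` for all but a fraction `2 e^(−d/2000)` of the sign matrices,
and a union bound over the at most `(m^k + 1)²` vectors `x` succeeds once `d ≥ 20000 k log m`.
With `c² = 2 / (7 k d)` the upper bound gives `‖v_S‖² ≤ 1`, and the lower one, a quarter of the
upper one, gives `‖v_S − v_{S'}‖² ≥ |S Δ S'| / (4k)`.
-/

open Finset Real
open scoped Nat

def spin (b : Bool) : ℝ := if b then 1 else -1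

section Rademacher

variable {n : ℕ}

def signedSum (x : Fin n → ℝ) (ε : Fin n → Bool) : ℝ := ∑ i, x i * spin (ε i)

lemma sum_exp_mul_signedSum (t : ℝ) (x : Fin n → ℝ) :
    ∑ ε, exp (t * signedSum x ε) = ∏ i, 2 * cosh (t * x i) := by
  simp_rw [signedSum, mul_sum, exp_sum]
  rw [← Fintype.prod_sum fun i b => exp (t * (x i * spin b))]
  refine prod_congr rfl fun i _ => ?_
  rw [Fintype.sum_bool, cosh_eq]
  simp only [spin, if_true, Bool.false_eq_true, if_false]
  ring_nf

lemma sum_exp_mul_signedSum_le (t : ℝ) (x : Fin n → ℝ) :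
    ∑ ε, exp (t * signedSum x ε) ≤ 2 ^ n * exp (t ^ 2 * sqNorm x / 2) := by
  rw [sum_exp_mul_signedSum]
  calc ∏ i, 2 * cosh (t * x i) ≤ ∏ i, 2 * exp ((t * x i) ^ 2 / 2) := by
        gcongr with i
        exact cosh_le_exp_half_sq _
    _ = 2 ^ n * exp (t ^ 2 * sqNorm x / 2) := by
        rw [prod_mul_distrib, prod_const, Finset.card_univ, Fintype.card_fin, ← exp_sum, sqNorm,
          mul_sum, sum_div]
        simp_rw [mul_pow]

lemma sum_cosh_mul_signedSum_le (t : ℝ) (x : Fin n → ℝ) :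
    ∑ ε, cosh (t * signedSum x ε) ≤ 2 ^ n * exp (t ^ 2 * sqNorm x / 2) := by
  have h₁ := sum_exp_mul_signedSum_le t x
  have h₂ := sum_exp_mul_signedSum_le (-t) x
  simp_rw [cosh_eq, ← sum_div, sum_add_distrib, neg_mul_eq_neg_mul, neg_sq] at *
  linarith

lemma pow_two_mul_le_factorial_mul_cosh (u : ℝ) (k : ℕ) :
    u ^ (2 * k) ≤ (2 * k)! * cosh u := by
  have h := le_hasSum (hasSum_cosh u) k fun j _ => by
    rw [pow_mul]; positivity
  rwa [div_le_iff₀' (by positivity)] at h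

lemma sum_signedSum_pow_two_mul_le (x : Fin n → ℝ) (hx : 0 < sqNorm x) (k : ℕ) :
    ∑ ε, signedSum x ε ^ (2 * k) ≤ 2 ^ n * k ! * (exp 1 * sqNorm x) ^ k := by
  rcases k.eq_zero_or_pos with rfl | hk
  · simp
  -- `t ^ 2 = 2k / ‖x‖²` minimises `(2k)! exp (t ^ 2 ‖x‖² / 2) / t ^ (2k)`
  set t := √(2 * k / sqNorm x)
  have ht : t ^ 2 = 2 * k / sqNorm x := sq_sqrt (by positivity)
  have hmoment : (2 * k / sqNorm x) ^ k * ∑ ε, signedSum x ε ^ (2 * k) ≤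
      (2 * k)! * (2 ^ n * exp 1 ^ k) :=
    calc (2 * k / sqNorm x) ^ k * ∑ ε, signedSum x ε ^ (2 * k)
        = ∑ ε, (t * signedSum x ε) ^ (2 * k) := by
          simp_rw [← ht, ← pow_mul, mul_sum, mul_pow]
      _ ≤ ∑ ε, (2 * k)! * cosh (t * signedSum x ε) :=
          sum_le_sum fun ε _ => pow_two_mul_le_factorial_mul_cosh _ _
      _ ≤ (2 * k)! * (2 ^ n * exp (t ^ 2 * sqNorm x / 2)) := by
          rw [← mul_sum]
          gcongr
          exact sum_cosh_mul_signedSum_le t x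
      _ = (2 * k)! * (2 ^ n * exp 1 ^ k) := by
          rw [ht, div_mul_cancel₀ _ hx.ne', ← exp_nat_mul]
          ring_nf
  have hfac : ((2 * k)! : ℝ) ≤ (2 * k) ^ k * k ! := by exact_mod_cast Nat.factorial_two_mul_le k
  calc ∑ ε, signedSum x ε ^ (2 * k)
        ≤ (2 * k)! * (2 ^ n * exp 1 ^ k) / (2 * k / sqNorm x) ^ k := by
        rwa [le_div_iff₀' (by positivity)]
    _ ≤ (2 * k) ^ k * k ! * (2 ^ n * exp 1 ^ k) / (2 * k / sqNorm x) ^ k := by gcongr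
    _ = 2 ^ n * k ! * (exp 1 * sqNorm x) ^ k := by
        rw [div_pow, mul_pow (exp 1)]
        field_simp

lemma sum_spin_mul_spin (i j : Fin n) :
    ∑ ε : Fin n → Bool, spin (ε i) * spin (ε j) = if i = j then 2 ^ n else 0 := by
  split_ifs with h
  · subst h
    simp [← sq, spin]
  · refine sum_ninvolution (fun ε => Function.update ε i (!ε i)) (fun ε => ?_)
      (fun ε _ => ?_) (fun _ => mem_univ _) (fun ε => ?_)
    · simp only [Function.update_self, Function.update_of_ne (Ne.symm h)]
      cases ε i <;> cases ε j <;> norm_num [spin]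
    · exact fun hε => by simpa using congrFun hε i
    · simp

lemma sum_signedSum_sq (x : Fin n → ℝ) : ∑ ε, signedSum x ε ^ 2 = 2 ^ n * sqNorm x := by
  calc ∑ ε, signedSum x ε ^ 2
        = ∑ i, ∑ j, x i * x j * ∑ ε : Fin n → Bool, spin (ε i) * spin (ε j) := by
        simp_rw [signedSum, sq, sum_mul_sum, mul_sum]
        rw [sum_comm]
        refine sum_congr rfl fun i _ => ?_
        rw [sum_comm]
        refine sum_congr rfl fun j _ => sum_congr rfl fun ε _ => ?_
        ring
    _ = 2 ^ n * sqNorm x := by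
        simp [sum_spin_mul_spin, sqNorm, mul_sum, sq, mul_comm]

lemma sum_exp_mul_signedSum_sq_le (x : Fin n → ℝ) (hx : 0 < sqNorm x) {t : ℝ} (ht : 0 ≤ t)
    (he : exp 1 * t < 1) :
    ∑ ε, exp (t / sqNorm x * signedSum x ε ^ 2) ≤ 2 ^ n / (1 - exp 1 * t) := by
  have hseries : HasSum (fun k => ∑ ε, (t / sqNorm x * signedSum x ε ^ 2) ^ k / k !)
      (∑ ε, exp (t / sqNorm x * signedSum x ε ^ 2)) :=
    hasSum_sum fun ε _ => exp_eq_exp_ℝ ▸ NormedSpace.expSeries_div_hasSum_exp _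
  have hgeom : HasSum (fun k => 2 ^ n * (exp 1 * t) ^ k) (2 ^ n / (1 - exp 1 * t)) :=
    (hasSum_geometric_of_lt_one (by positivity) he).mul_left (2 ^ n)
  refine hasSum_le (fun k => ?_) hseries hgeom
  calc ∑ ε, (t / sqNorm x * signedSum x ε ^ 2) ^ k / k !
      = (t / sqNorm x) ^ k / k ! * ∑ ε, signedSum x ε ^ (2 * k) := by
        rw [mul_sum]
        refine sum_congr rfl fun ε _ => ?_
        rw [mul_pow, pow_mul]
        ring
    _ ≤ (t / sqNorm x) ^ k / k ! * (2 ^ n * k ! * (exp 1 * sqNorm x) ^ k) := by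
        gcongr
        exact sum_signedSum_pow_two_mul_le x hx k
    _ = 2 ^ n * (exp 1 * t) ^ k := by
        rw [div_pow, mul_pow, mul_pow]
        field_simp

lemma exp_neg_le_one_sub_add_sq_div_two {v : ℝ} (hv : 0 ≤ v) :
    exp (-v) ≤ 1 - v + v ^ 2 / 2 := by
  rw [exp_neg, inv_le_iff_one_le_mul₀ (exp_pos v)]
  nlinarith [quadratic_le_exp_of_nonneg hv, pow_nonneg hv 4, sq_nonneg (v - 1)]

lemma sum_exp_neg_mul_signedSum_sq_le (x : Fin n → ℝ) (hx : 0 < sqNorm x) {t : ℝ}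
    (ht : 0 ≤ t) :
    ∑ ε, exp (-(t / sqNorm x * signedSum x ε ^ 2)) ≤
      2 ^ n * exp (-t + exp 1 ^ 2 * t ^ 2) := by
  have h₄ : ∑ ε, signedSum x ε ^ 4 ≤ 2 ^ n * 2 * (exp 1 * sqNorm x) ^ 2 := by
    simpa using sum_signedSum_pow_two_mul_le x hx 2
  calc ∑ ε, exp (-(t / sqNorm x * signedSum x ε ^ 2))
      ≤ ∑ ε, (1 - t / sqNorm x * signedSum x ε ^ 2 +
          (t / sqNorm x) ^ 2 * signedSum x ε ^ 4 / 2) :=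
        sum_le_sum fun ε _ =>
          (exp_neg_le_one_sub_add_sq_div_two (by positivity)).trans_eq (by ring)
    _ = 2 ^ n - t / sqNorm x * (2 ^ n * sqNorm x) +
          (t / sqNorm x) ^ 2 * (∑ ε, signedSum x ε ^ 4) / 2 := by
        rw [sum_add_distrib, sum_sub_distrib, ← mul_sum, ← sum_div, ← mul_sum,
          sum_signedSum_sq]
        simp
    _ ≤ 2 ^ n - t / sqNorm x * (2 ^ n * sqNorm x) +
          (t / sqNorm x) ^ 2 * (2 ^ n * 2 * (exp 1 * sqNorm x) ^ 2) / 2 := by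
        gcongr
    _ = 2 ^ n * (1 + (-t + exp 1 ^ 2 * t ^ 2)) := by
        field_simp
        ring
    _ ≤ 2 ^ n * exp (-t + exp 1 ^ 2 * t ^ 2) := by
        gcongr
        linarith [add_one_le_exp (-t + exp 1 ^ 2 * t ^ 2)]

end Rademacher

section Counting

lemma card_filter_le_sum_exp_pow {Ω : Type*} [Fintype Ω] {d : ℕ} (p : (Fin d → Ω) → Prop)
    [DecidablePred p] (g : Ω → ℝ) (hpg : ∀ ω, p ω → 0 ≤ ∑ j, g (ω j)) :
    (#{ω | p ω} : ℝ) ≤ (∑ r, exp (g r)) ^ d :=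
  calc (#{ω | p ω} : ℝ) = ∑ ω with p ω, 1 := by simp
    _ ≤ ∑ ω with p ω, exp (∑ j, g (ω j)) :=
      sum_le_sum fun ω hω => one_le_exp (hpg ω (mem_filter.1 hω).2)
    _ ≤ ∑ ω : Fin d → Ω, exp (∑ j, g (ω j)) :=
      sum_le_sum_of_subset_of_nonneg (filter_subset _ _) fun _ _ _ => (exp_pos _).le
    _ = (∑ r, exp (g r)) ^ d := by simp_rw [exp_sum, Fintype.sum_pow]

lemma exists_forall_of_sum_card_filter_not_lt {α Ω : Type*} [Fintype Ω] (X : Finset α)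
    (P : α → Ω → Prop) [∀ x, DecidablePred (P x)]
    (h : ∑ x ∈ X, (#{ω | ¬P x ω} : ℝ) < Fintype.card Ω) :
    ∃ ω, ∀ x ∈ X, P x ω := by
  classical
  by_contra! hbad
  have hcover : (univ : Finset Ω) ⊆ X.biUnion fun x => {ω | ¬P x ω} := fun ω _ => by
    obtain ⟨x, hx, hPx⟩ := hbad ω
    exact mem_biUnion.2 ⟨x, hx, mem_filter.2 ⟨mem_univ _, hPx⟩⟩
  have := (card_le_card hcover).trans card_biUnion_le
  rw [card_univ] at this
  exact h.not_ge (by exact_mod_cast this)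

end Counting

section SignEmbedding

variable {n d : ℕ}

def signEmbedding (ω : Fin d → Fin n → Bool) (x : Fin n → ℝ) : Fin d → ℝ :=
  fun j => signedSum x (ω j)

lemma card_sqNorm_signEmbedding_large_le (x : Fin n → ℝ) (hx : 0 < sqNorm x) :
    (#{ω : Fin d → Fin n → Bool |
        7 / 2 * d * sqNorm x ≤ sqNorm (signEmbedding ω x)} : ℝ) ≤
      (2 ^ n * exp (-(1 / 2000))) ^ d := by
  refine (card_filter_le_sum_exp_pow _ (fun ε => (signedSum x ε ^ 2 / sqNorm x - 7 / 2) / 20)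
    fun ω hω => ?_).trans (pow_le_pow_left₀ (by positivity) ?_ d)
  · have hsum : ∑ j, (signedSum x (ω j) ^ 2 / sqNorm x - 7 / 2) / 20 =
        (sqNorm (signEmbedding ω x) / sqNorm x - 7 / 2 * d) / 20 := by
      simp only [sqNorm, signEmbedding, ← sum_div, sum_sub_distrib, sum_const, card_univ,
        Fintype.card_fin, nsmul_eq_mul]
      ring
    have := (le_div_iff₀ hx).2 hω
    linarith
  · have he := exp_one_lt_d9
    calc ∑ ε, exp ((signedSum x ε ^ 2 / sqNorm x - 7 / 2) / 20)
        = exp (-(7 / 40)) * ∑ ε, exp (1 / 20 / sqNorm x * signedSum x ε ^ 2) := by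
          rw [mul_sum]
          refine sum_congr rfl fun ε _ => ?_
          rw [← exp_add]
          ring_nf
      _ ≤ exp (-(7 / 40)) * (2 ^ n / (1 - exp 1 * (1 / 20))) := by
          gcongr
          exact sum_exp_mul_signedSum_sq_le x hx (by norm_num) (by linarith)
      _ = 2 ^ n * exp (-(1 / 2000)) / (exp (7 / 40 - 1 / 2000) * (1 - exp 1 / 20)) := by
          rw [show -(7 / 40 : ℝ) = -(1 / 2000) - (7 / 40 - 1 / 2000) by norm_num, exp_sub]
          field_simp
      _ ≤ 2 ^ n * exp (-(1 / 2000)) :=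
          div_le_self (by positivity)
            (by nlinarith [exp_pos 1, add_one_le_exp (7 / 40 - 1 / 2000)])

lemma card_sqNorm_signEmbedding_small_le (x : Fin n → ℝ) (hx : 0 < sqNorm x) :
    (#{ω : Fin d → Fin n → Bool |
        sqNorm (signEmbedding ω x) ≤ 7 / 8 * d * sqNorm x} : ℝ) ≤
      (2 ^ n * exp (-(1 / 2000))) ^ d := by
  refine (card_filter_le_sum_exp_pow _ (fun ε => (7 / 8 - signedSum x ε ^ 2 / sqNorm x) / 120)
    fun ω hω => ?_).trans (pow_le_pow_left₀ (by positivity) ?_ d)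
  · have hsum : ∑ j, (7 / 8 - signedSum x (ω j) ^ 2 / sqNorm x) / 120 =
        (7 / 8 * d - sqNorm (signEmbedding ω x) / sqNorm x) / 120 := by
      simp only [sqNorm, signEmbedding, ← sum_div, sum_sub_distrib, sum_const, card_univ,
        Fintype.card_fin, nsmul_eq_mul]
      ring
    have := (div_le_iff₀ hx).2 hω
    linarith
  · have he := exp_one_lt_d9
    calc ∑ ε, exp ((7 / 8 - signedSum x ε ^ 2 / sqNorm x) / 120)
        = exp (7 / 960) * ∑ ε, exp (-(1 / 120 / sqNorm x * signedSum x ε ^ 2)) := by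
          rw [mul_sum]
          refine sum_congr rfl fun ε _ => ?_
          rw [← exp_add]
          ring_nf
      _ ≤ exp (7 / 960) * (2 ^ n * exp (-(1 / 120) + exp 1 ^ 2 * (1 / 120) ^ 2)) := by
          gcongr
          exact sum_exp_neg_mul_signedSum_sq_le x hx (by norm_num)
      _ ≤ 2 ^ n * exp (-(1 / 2000)) := by
          rw [mul_left_comm, ← exp_add]
          gcongr
          nlinarith [exp_pos 1]

lemma card_sqNorm_signEmbedding_notMem_Icc_le (x : Fin n → ℝ) :
    (#{ω : Fin d → Fin n → Bool | sqNorm (signEmbedding ω x) ∉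
        Set.Icc (7 / 8 * d * sqNorm x) (7 / 2 * d * sqNorm x)} : ℝ) ≤
      2 * (2 ^ n * exp (-(1 / 2000))) ^ d := by
  rcases (sum_nonneg fun i _ => sq_nonneg (x i) : 0 ≤ sqNorm x).eq_or_lt with hx | hx
  · have : x = 0 := funext fun i => pow_eq_zero_iff two_ne_zero |>.1 <|
      (sum_eq_zero_iff_of_nonneg fun i _ => sq_nonneg (x i)).1 hx.symm i (mem_univ i)
    have hmem : ∀ ω : Fin d → Fin n → Bool,
        sqNorm (signEmbedding ω x) ∈ Set.Icc (7 / 8 * d * sqNorm x) (7 / 2 * d * sqNorm x) :=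
      fun ω => by simp [this, signEmbedding, signedSum, sqNorm]
    simp only [hmem, not_true_eq_false, filter_false, card_empty, Nat.cast_zero]
    positivity
  have hsplit : ({ω | sqNorm (signEmbedding ω x) ∉
        Set.Icc (7 / 8 * d * sqNorm x) (7 / 2 * d * sqNorm x)} :
          Finset (Fin d → Fin n → Bool)) ⊆
      ({ω | 7 / 2 * d * sqNorm x ≤ sqNorm (signEmbedding ω x)} : Finset _) ∪
        ({ω | sqNorm (signEmbedding ω x) ≤ 7 / 8 * d * sqNorm x} : Finset _) := fun ω => by
    simp only [mem_filter, mem_union, mem_univ, true_and, Set.mem_Icc, not_and_or, not_le]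
    rintro (h | h) <;> [right; left] <;> exact h.le
  have hcard := (Nat.cast_le (α := ℝ)).2 ((card_le_card hsplit).trans (card_union_le _ _))
  push_cast at hcard
  linarith [card_sqNorm_signEmbedding_large_le (d := d) x hx,
    card_sqNorm_signEmbedding_small_le (d := d) x hx]

theorem exists_signEmbedding_sqNorm_mem_Icc (X : Finset (Fin n → ℝ))
    (hX : 2 * #X * exp (-(d / 2000)) < 1) :
    ∃ ω : Fin d → Fin n → Bool, ∀ x ∈ X,
      sqNorm (signEmbedding ω x) ∈ Set.Icc (7 / 8 * d * sqNorm x) (7 / 2 * d * sqNorm x) := by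
  refine exists_forall_of_sum_card_filter_not_lt X _ ?_
  calc ∑ x ∈ X, (#{ω : Fin d → Fin n → Bool | sqNorm (signEmbedding ω x) ∉
          Set.Icc (7 / 8 * d * sqNorm x) (7 / 2 * d * sqNorm x)} : ℝ)
      ≤ ∑ x ∈ X, 2 * (2 ^ n * exp (-(1 / 2000))) ^ d :=
        sum_le_sum fun x _ => card_sqNorm_signEmbedding_notMem_Icc_le x
    _ = (2 * #X * exp (-(d / 2000))) * 2 ^ (n * d) := by
        rw [sum_const, nsmul_eq_mul, mul_pow, ← exp_nat_mul, ← pow_mul]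
        ring_nf
    _ < Fintype.card (Fin d → Fin n → Bool) := by
        simp only [Fintype.card_fun, Fintype.card_bool, Fintype.card_fin, Nat.cast_pow,
          Nat.cast_ofNat, ← pow_mul]
        rw [mul_comm n d]
        nlinarith [pow_pos (two_pos (α := ℝ)) (d * n)]

end SignEmbedding

section Experts

variable {k m d : ℕ}

lemma sqNorm_smul (c : ℝ) (y : Fin d → ℝ) : sqNorm (c • y) = c ^ 2 * sqNorm y := by
  simp [sqNorm, mul_sum, mul_pow]

def indicatorVec (S : Finset (Fin m)) : Fin m → ℝ := fun i => if i ∈ S then 1 else 0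

lemma signedSum_indicatorVec_sub (S S' : Finset (Fin m)) (ε : Fin m → Bool) :
    signedSum (indicatorVec S - indicatorVec S') ε =
      ∑ i ∈ S, spin (ε i) - ∑ i ∈ S', spin (ε i) := by
  simp [signedSum, indicatorVec, sub_mul, sum_sub_distrib, ite_mul]

lemma sqNorm_indicatorVec_sub (S S' : Finset (Fin m)) :
    sqNorm (indicatorVec S - indicatorVec S') = #(S \ S' ∪ S' \ S) := by
  have h : ∀ i, (indicatorVec S - indicatorVec S') i ^ 2 =
      if i ∈ S \ S' ∪ S' \ S then 1 else 0 := fun i => by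
    by_cases hi : i ∈ S <;> by_cases hi' : i ∈ S' <;> simp [indicatorVec, hi, hi']
  rw [sqNorm, sum_congr rfl fun i _ => h i, sum_boole, filter_mem_eq_inter, univ_inter]

-- `∅` is admitted so that `1_S = 1_S - 1_∅` is among these vectors too.
def kSubsetDifferences (k m : ℕ) : Finset (Fin m → ℝ) :=
  ((insert ∅ (powersetCard k univ)) ×ˢ (insert ∅ (powersetCard k univ))).image
    fun p : Finset (Fin m) × Finset (Fin m) => indicatorVec p.1 - indicatorVec p.2

lemma card_kSubsetDifferences_le : #(kSubsetDifferences k m) ≤ (m ^ k + 1) ^ 2 := by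
  have hQ : #(insert ∅ (powersetCard k (univ : Finset (Fin m)))) ≤ m ^ k + 1 := by
    refine (card_insert_le _ _).trans ?_
    rw [card_powersetCard, card_univ, Fintype.card_fin]
    exact Nat.add_le_add_right (Nat.choose_le_pow m k) 1
  calc _ ≤ _ := card_image_le
    _ ≤ (m ^ k + 1) ^ 2 := by rw [card_product, sq]; exact Nat.mul_le_mul hQ hQ

lemma two_mul_pow_add_one_sq_mul_exp_lt_one (hk : 1 ≤ k) (hm : 2 ≤ m)
    (hd : 20000 * k * log m ≤ d) :
    2 * ((m : ℝ) ^ k + 1) ^ 2 * exp (-(d / 2000)) < 1 := by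
  set M : ℝ := (m : ℝ) ^ k
  have hm' : (2 : ℝ) ≤ m := by exact_mod_cast hm
  have hM : 2 ≤ M := hm'.trans (le_self_pow₀ (by linarith) (by omega))
  have hexp : M ^ 10 ≤ exp (d / 2000) := by
    rw [← exp_log (by positivity : 0 < M), ← exp_nat_mul, Real.log_pow]
    gcongr
    push_cast
    linarith
  rw [exp_neg, ← div_eq_mul_inv, div_lt_one (exp_pos _)]
  calc 2 * (M + 1) ^ 2 < 2 ^ 8 * M ^ 2 := by nlinarith
    _ ≤ M ^ 8 * M ^ 2 := by gcongr
    _ = M ^ 10 := by ring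
    _ ≤ _ := hexp

lemma exists_separated_experts_of_signEmbedding (hk : 0 < k) (hd : 0 < d)
    (ω : Fin d → Fin m → Bool)
    (hω : ∀ x ∈ kSubsetDifferences k m,
      sqNorm (signEmbedding ω x) ∈ Set.Icc (7 / 8 * d * sqNorm x) (7 / 2 * d * sqNorm x)) :
    ∃ v : Fin m → Fin d → ℝ,
      (∀ S : Finset (Fin m), S.card = k → sqNorm (∑ i ∈ S, v i) ≤ 1) ∧
      (∀ S S' : Finset (Fin m), S.card = k → S'.card = k →
        (((S \ S') ∪ (S' \ S)).card : ℝ) / (4 * k) ≤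
          sqNorm ((∑ i ∈ S, v i) - ∑ i ∈ S', v i)) := by
  set c := √(2 / (7 * k * d))
  have hc : c ^ 2 = 2 / (7 * k * d) := sq_sqrt (by positivity)
  set v : Fin m → Fin d → ℝ := fun i => c • fun j => spin (ω j i)
  have hv : ∀ S S' : Finset (Fin m), #S = k ∨ S = ∅ → #S' = k ∨ S' = ∅ →
      sqNorm ((∑ i ∈ S, v i) - ∑ i ∈ S', v i) ∈
        Set.Icc ((#(S \ S' ∪ S' \ S) : ℝ) / (4 * k)) (#(S \ S' ∪ S' \ S) / k) := by
    intro S S' hS hS'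
    have hmem : indicatorVec S - indicatorVec S' ∈ kSubsetDifferences k m :=
      mem_image.2 ⟨(S, S'), by
        simp only [mem_product, mem_insert, mem_powersetCard, subset_univ, true_and]
        tauto, rfl⟩
    have heq : (∑ i ∈ S, v i) - ∑ i ∈ S', v i =
        c • signEmbedding ω (indicatorVec S - indicatorVec S') := by
      ext j
      simp [v, signEmbedding, signedSum_indicatorVec_sub, Finset.sum_apply, mul_sum, mul_sub]
    obtain ⟨hlo, hhi⟩ := hω _ hmem
    rw [heq, sqNorm_smul, hc]
    rw [sqNorm_indicatorVec_sub] at hlo hhi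
    constructor
    · calc (#(S \ S' ∪ S' \ S) : ℝ) / (4 * k)
            = 2 / (7 * k * d) * (7 / 8 * d * #(S \ S' ∪ S' \ S)) := by
            field_simp
            ring
        _ ≤ _ := by gcongr
    · calc 2 / (7 * k * d) * sqNorm (signEmbedding ω (indicatorVec S - indicatorVec S'))
          ≤ 2 / (7 * k * d) * (7 / 2 * d * #(S \ S' ∪ S' \ S)) := by gcongr
        _ = #(S \ S' ∪ S' \ S) / k := by field_simp
  refine ⟨v, fun S hS => ?_, fun S S' hS hS' => (hv S S' (.inl hS) (.inl hS')).1⟩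
  have := (hv S ∅ (.inl hS) (.inr rfl)).2
  simpa [hS, hk.ne'] using this

end Experts

/-- Construction of constant experts: there are universal constants `C, c > 0` such that for
`k ≤ m` and `d ≥ C k log m` there are vectors `v_1,…,v_m ∈ ℝ^d` whose subset sums
`v_S = ∑_{i∈S} v_i` over `k`-element subsets satisfy `‖v_S‖² ≤ 1` (boundedness) and
`‖v_S − v_{S'}‖² ≥ |S Δ S'|/(4k)` (separation). -/
theorem exists_separated_constant_experts :
    ∃ C c : ℝ, 0 < C ∧ 0 < c ∧
      ∀ (k m d : ℕ), k ≤ m → (d : ℝ) ≥ C * k * Real.log m →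
        ∃ v : Fin m → Fin d → ℝ,
          (∀ S : Finset (Fin m), S.card = k → sqNorm (∑ i ∈ S, v i) ≤ 1) ∧
          (∀ S S' : Finset (Fin m), S.card = k → S'.card = k →
            (((S \ S') ∪ (S' \ S)).card : ℝ) / (4 * k) ≤
              sqNorm ((∑ i ∈ S, v i) - ∑ i ∈ S', v i)) := by
  refine ⟨20000, 1, by norm_num, one_pos, fun k m d hkm hd => ?_⟩
  rcases Nat.eq_zero_or_pos k with rfl | hk
  · exact ⟨0, fun S _ => by simp [sqNorm],
      fun S S' hS hS' => by simp [sqNorm, card_eq_zero.1 hS, card_eq_zero.1 hS']⟩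
  rcases lt_or_ge m 2 with hm | hm
  · have huniv : ∀ S : Finset (Fin m), #S = k → S = univ := fun S hS =>
      eq_univ_of_card S (by rw [Fintype.card_fin]; omega)
    exact ⟨0, fun S _ => by simp [sqNorm],
      fun S S' hS hS' => by simp [sqNorm, huniv S hS, huniv S' hS']⟩
  have hcount := two_mul_pow_add_one_sq_mul_exp_lt_one hk hm hd
  have hd0 : 0 < d := by
    have := Real.log_pos (one_lt_two.trans_le (by exact_mod_cast hm : (2 : ℝ) ≤ m))
    exact_mod_cast (hd.trans_lt' (by positivity) : (0 : ℝ) < d)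
  obtain ⟨ω, hω⟩ := exists_signEmbedding_sqNorm_mem_Icc (d := d) (kSubsetDifferences k m) <|
    hcount.trans_le' <| by
      gcongr
      exact_mod_cast card_kSubsetDifferences_le
  exact exists_separated_experts_of_signEmbedding hk hd0 ω hω
end
end

section
/- Let δ > 0, let X_1,…,X_k be i.i.d. N(δ,1) random variables and X_{k+1},…,X_m be i.i.d. N(0,1) random variables, with all m variables independent. Let f(δ) = P[X_i > X_j for all i ∈ {1,…,k} and all j ∈ {k+1,…,m}]. Then f(δ) ≤ exp(δ·k·√(2·log m)) / binom(m,k). -/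
/-!
Under the product `P₀` of standard Gaussians the shifted law has density
`F x = exp (∑ i, (a i * x i - a i ^ 2 / 2))`, where `a = (δ, …, δ, 0, …, 0)`. Hölder's inequality
with conjugate exponents `p, q` gives `P_δ(A) ≤ P₀(A) ^ (1/p) * ‖F‖_{L^q(P₀)}`, and
`‖F‖_{L^q(P₀)} = exp ((q - 1) k δ² / 2)` because `F ^ q` is a constant times the density of the
shift by `q • a`. Under the exchangeable measure `P₀` the events "the coordinates in `T` beat all
the others", `#T = k`, are disjoint and equiprobable, so `P₀(A) ≤ 1 / binom(m,k)`. Choosing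
`q = √(2 log m) / δ` and using `binom(m,k) ≤ m ^ k` gives the bound; when `√(2 log m) ≤ δ` the
right-hand side is at least `1`.
-/

open MeasureTheory ProbabilityTheory Real Finset
open scoped ENNReal

lemma withDensity_apply_le_rpow_mul_lintegral_rpow {α : Type*} [MeasurableSpace α]
    {μ : Measure α} {f : α → ℝ≥0∞} (hf : AEMeasurable f μ) {s : Set α} (hs : MeasurableSet s)
    {q : ℝ} (hq : 1 < q) :
    μ.withDensity f s ≤ μ s ^ (1 - q⁻¹) * (∫⁻ x, f x ^ q ∂μ) ^ q⁻¹ := by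
  have hpq := HolderConjugate.conjExponent hq
  calc μ.withDensity f s = ∫⁻ x in s, 1 * f x ∂μ := by simp [withDensity_apply f hs]
    _ ≤ (∫⁻ x in s, 1 ^ conjExponent q ∂μ) ^ (1 / conjExponent q)
          * (∫⁻ x in s, f x ^ q ∂μ) ^ (1 / q) :=
      ENNReal.lintegral_mul_le_Lp_mul_Lq _ hpq.symm aemeasurable_const hf.restrict
    _ ≤ μ s ^ (1 - q⁻¹) * (∫⁻ x, f x ^ q ∂μ) ^ q⁻¹ := by
      rw [hpq.one_sub_inv]
      simp only [ENNReal.one_rpow, setLIntegral_const, one_mul, one_div]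
      gcongr
      exact Measure.restrict_le_self

lemma gaussianReal_eq_withDensity (c : ℝ) :
    gaussianReal c 1 =
      (gaussianReal 0 1).withDensity fun y => ENNReal.ofReal (exp (c * y - c ^ 2 / 2)) := by
  rw [gaussianReal_of_var_ne_zero 0 one_ne_zero, gaussianReal_of_var_ne_zero c one_ne_zero,
    ← withDensity_mul _ (measurable_gaussianPDF 0 1) (by fun_prop)]
  congr 1
  ext y
  simp only [Pi.mul_apply, gaussianPDF, gaussianPDFReal, NNReal.coe_one]
  rw [← ENNReal.ofReal_mul (by positivity), mul_assoc _ (rexp _), ← exp_add]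
  congr 3
  ring

lemma lintegral_fintype_prod_eq_prod {ι : Type*} [Fintype ι] {Ω : ι → Type*}
    [∀ i, MeasurableSpace (Ω i)]
    {μ : (i : ι) → Measure (Ω i)} [∀ i, IsProbabilityMeasure (μ i)]
    {f : (i : ι) → Ω i → ℝ≥0∞} (hf : ∀ i, Measurable (f i)) :
    ∫⁻ x, ∏ i, f i (x i) ∂Measure.pi μ = ∏ i, ∫⁻ y, f i y ∂μ i := by
  rw [lintegral_prod_eq_prod_lintegral_of_indepFun _ _
    (iIndepFun_pi fun i => (hf i).aemeasurable) fun i => (hf i).comp (measurable_pi_apply i)]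
  exact prod_congr rfl fun i _ => (measurePreserving_eval μ i).lintegral_comp (hf i)

section GaussianShift

variable {ι : Type*} [Fintype ι]

noncomputable def gaussianShiftDensity (a x : ι → ℝ) : ℝ≥0∞ :=
  ENNReal.ofReal (exp (∑ i, (a i * x i - a i ^ 2 / 2)))

lemma measurable_gaussianShiftDensity (a : ι → ℝ) : Measurable (gaussianShiftDensity a) := by
  unfold gaussianShiftDensity
  fun_prop

lemma gaussianShiftDensity_eq_prod (a x : ι → ℝ) :
    gaussianShiftDensity a x = ∏ i, ENNReal.ofReal (exp (a i * x i - a i ^ 2 / 2)) := by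
  rw [gaussianShiftDensity, exp_sum, ENNReal.ofReal_prod_of_nonneg fun i _ => (exp_pos _).le]

lemma pi_gaussianReal_eq_withDensity (a : ι → ℝ) :
    Measure.pi (fun i => gaussianReal (a i) 1) =
      (Measure.pi fun _ : ι => gaussianReal 0 1).withDensity (gaussianShiftDensity a) := by
  refine Measure.pi_eq fun s hs => ?_
  classical
  have hbox := MeasurableSet.univ_pi hs
  have hind : (Set.univ.pi s).indicator (gaussianShiftDensity a) = fun x =>
      ∏ i, (s i).indicator (fun y => ENNReal.ofReal (exp (a i * y - a i ^ 2 / 2))) (x i) := by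
    ext x
    simp only [gaussianShiftDensity_eq_prod, Set.indicator_apply, prod_ite_zero, Set.mem_univ_pi,
      mem_univ, true_imp_iff]
  rw [withDensity_apply _ hbox, ← lintegral_indicator hbox, hind]
  rw [lintegral_fintype_prod_eq_prod fun i => (by fun_prop : Measurable _).indicator (hs i)]
  refine prod_congr rfl fun i _ => ?_
  rw [lintegral_indicator (hs i), ← withDensity_apply _ (hs i), ← gaussianReal_eq_withDensity]

lemma gaussianShiftDensity_rpow (a x : ι → ℝ) (q : ℝ) :
    gaussianShiftDensity a x ^ q =
      ENNReal.ofReal (exp ((q ^ 2 - q) / 2 * ∑ i, a i ^ 2)) * gaussianShiftDensity (q • a) x := by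
  rw [gaussianShiftDensity, gaussianShiftDensity, ENNReal.ofReal_rpow_of_pos (exp_pos _),
    ← exp_mul, ← ENNReal.ofReal_mul (exp_pos _).le, ← exp_add, mul_comm, Finset.mul_sum,
    Finset.mul_sum, ← sum_add_distrib]
  congr 3 with i
  simp only [Pi.smul_apply, smul_eq_mul]
  ring

lemma lintegral_gaussianShiftDensity_rpow (a : ι → ℝ) (q : ℝ) :
    ∫⁻ x, gaussianShiftDensity a x ^ q ∂Measure.pi (fun _ : ι => gaussianReal 0 1) =
      ENNReal.ofReal (exp ((q ^ 2 - q) / 2 * ∑ i, a i ^ 2)) := by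
  have hmass : ∫⁻ x, gaussianShiftDensity (q • a) x ∂Measure.pi (fun _ : ι => gaussianReal 0 1)
      = 1 := by
    rw [← setLIntegral_univ, ← withDensity_apply _ MeasurableSet.univ,
      ← pi_gaussianReal_eq_withDensity, measure_univ]
  simp_rw [gaussianShiftDensity_rpow]
  rw [lintegral_const_mul _ (measurable_gaussianShiftDensity _), hmass, mul_one]

end GaussianShift

lemma pi_gaussianReal_apply_le_rpow_mul_exp {ι : Type*} [Fintype ι] (a : ι → ℝ)
    {A : Set (ι → ℝ)} (hA : MeasurableSet A) {q : ℝ} (hq : 1 < q) :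
    Measure.pi (fun i => gaussianReal (a i) 1) A ≤
      Measure.pi (fun _ : ι => gaussianReal 0 1) A ^ (1 - q⁻¹) *
        ENNReal.ofReal (exp ((q - 1) / 2 * ∑ i, a i ^ 2)) := by
  rw [pi_gaussianReal_eq_withDensity]
  refine (withDensity_apply_le_rpow_mul_lintegral_rpow
    (measurable_gaussianShiftDensity a).aemeasurable hA hq).trans_eq ?_
  rw [lintegral_gaussianShiftDensity_rpow, ENNReal.ofReal_rpow_of_pos (exp_pos _), ← exp_mul]
  congr 3
  field_simp

section TopEvent

variable {ι : Type*}

def topEvent (T : Finset ι) : Set (ι → ℝ) :=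
  {x | ∀ i ∈ T, ∀ j ∉ T, x j < x i}

lemma measurableSet_topEvent [Countable ι] (T : Finset ι) : MeasurableSet (topEvent T) := by
  simp only [topEvent, Set.ofPred_forall]
  exact .iInter fun i => .iInter fun _ => .iInter fun j => .iInter fun _ =>
    measurableSet_lt (measurable_pi_apply j) (measurable_pi_apply i)

lemma disjoint_topEvent {S T : Finset ι} (hcard : #S = #T) (hST : S ≠ T) :
    Disjoint (topEvent S) (topEvent T) := by
  obtain ⟨i, hiS, hiT⟩ := not_subset.mp fun h => hST (eq_of_subset_of_card_le h hcard.ge)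
  obtain ⟨j, hjT, hjS⟩ := not_subset.mp fun h => hST (eq_of_subset_of_card_le h hcard.le).symm
  exact Set.disjoint_left.mpr fun x hxS hxT => (hxS i hiS j hjS).asymm (hxT j hjT i hiT)

lemma preimage_comp_perm_topEvent {S T : Finset ι} (σ : Equiv.Perm ι)
    (hσ : ∀ i, σ i ∈ T ↔ i ∈ S) : (fun x => x ∘ σ) ⁻¹' topEvent S = topEvent T := by
  ext x
  simp only [Set.mem_preimage, topEvent, Set.mem_ofPred_eq, Function.comp_apply]
  constructor
  · intro h i hi j hj
    simpa using h (σ.symm i) (by rwa [← hσ, σ.apply_symm_apply]) (σ.symm j)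
      (by rwa [← hσ, σ.apply_symm_apply])
  · intro h i hi j hj
    exact h (σ i) ((hσ i).mpr hi) (σ j) (by rwa [hσ])

lemma measurePreserving_comp_perm [Fintype ι] (μ : Measure ℝ) [SigmaFinite μ]
    (σ : Equiv.Perm ι) :
    MeasurePreserving (fun x : ι → ℝ => x ∘ σ) (Measure.pi fun _ => μ) (Measure.pi fun _ => μ) :=
  measurePreserving_arrowCongr' (fun _ => μ) (fun _ => μ) σ.symm (MeasurableEquiv.refl ℝ)
    fun _ => MeasurePreserving.id μ

lemma pi_topEvent_eq_of_card_eq [Fintype ι] [DecidableEq ι] (μ : Measure ℝ) [SigmaFinite μ]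
    {S T : Finset ι} (hcard : #S = #T) :
    Measure.pi (fun _ => μ) (topEvent S) = Measure.pi (fun _ => μ) (topEvent T) := by
  set σ := (equivOfCardEq hcard).extendSubtype
  have hσ : ∀ i, σ i ∈ T ↔ i ∈ S := fun i => by
    by_cases hi : i ∈ S
    · exact iff_of_true (Equiv.extendSubtype_mem _ i hi) hi
    · exact iff_of_false (Equiv.extendSubtype_not_mem _ i hi) hi
  rw [← preimage_comp_perm_topEvent σ hσ,
    (measurePreserving_comp_perm μ σ).measure_preimage
      (measurableSet_topEvent S).nullMeasurableSet]

lemma pi_topEvent_le_inv_choose [Fintype ι] (μ : Measure ℝ) [IsProbabilityMeasure μ]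
    (T : Finset ι) :
    Measure.pi (fun _ => μ) (topEvent T) ≤ ((Fintype.card ι).choose #T : ℝ≥0∞)⁻¹ := by
  classical
  set P := Measure.pi fun _ : ι => μ
  rw [ENNReal.le_inv_iff_mul_le, mul_comm, ← card_univ, ← card_powersetCard, ← nsmul_eq_mul,
    ← sum_const]
  calc ∑ _ ∈ powersetCard #T univ, P (topEvent T)
      = ∑ S ∈ powersetCard #T univ, P (topEvent S) :=
        sum_congr rfl fun S hS => pi_topEvent_eq_of_card_eq μ (mem_powersetCard_univ.mp hS).symm
    _ = P (⋃ S ∈ powersetCard #T univ, topEvent S) :=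
        (measure_biUnion_finset (fun S hS S' hS' => disjoint_topEvent
          ((mem_powersetCard_univ.mp hS).trans (mem_powersetCard_univ.mp hS').symm))
          fun S _ => measurableSet_topEvent S).symm
    _ ≤ 1 := prob_le_one

lemma pi_gaussianReal_topEvent_le [Fintype ι] [DecidableEq ι] (T : Finset ι) (δ : ℝ) {q : ℝ}
    (hq : 1 < q) :
    Measure.pi (fun i => gaussianReal (if i ∈ T then δ else 0) 1) (topEvent T) ≤
      ENNReal.ofReal (((Fintype.card ι).choose #T : ℝ)⁻¹ ^ (1 - q⁻¹) *
        exp ((q - 1) / 2 * (#T * δ ^ 2))) := by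
  have hsum : ∑ i, (if i ∈ T then δ else 0) ^ 2 = #T * δ ^ 2 := by
    simp [apply_ite (· ^ 2)]
  have hB : (0 : ℝ) < (Fintype.card ι).choose #T :=
    Nat.cast_pos.mpr (Nat.choose_pos (card_le_univ T))
  calc _ ≤ Measure.pi (fun _ : ι => gaussianReal 0 1) (topEvent T) ^ (1 - q⁻¹) *
          ENNReal.ofReal (exp ((q - 1) / 2 * (#T * δ ^ 2))) := by
        rw [← hsum]
        exact pi_gaussianReal_apply_le_rpow_mul_exp _ (measurableSet_topEvent T) hq
    _ ≤ ((Fintype.card ι).choose #T : ℝ≥0∞)⁻¹ ^ (1 - q⁻¹) *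
          ENNReal.ofReal (exp ((q - 1) / 2 * (#T * δ ^ 2))) := by
        gcongr
        · exact sub_nonneg.mpr (inv_le_one_of_one_le₀ hq.le)
        · exact pi_topEvent_le_inv_choose _ T
    _ = _ := by
        rw [ENNReal.ofReal_mul (by positivity), ← ENNReal.ofReal_rpow_of_pos (inv_pos.mpr hB),
          ENNReal.ofReal_inv_of_pos hB, ENNReal.ofReal_natCast]

end TopEvent

lemma log_choose_le_mul_log (m k : ℕ) : log (m.choose k) ≤ k * log m := by
  rcases (m.choose k).eq_zero_or_pos with h | h
  · rw [h, Nat.cast_zero, log_zero]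
    exact mul_nonneg k.cast_nonneg (log_natCast_nonneg m)
  · calc log (m.choose k) ≤ log ((m : ℝ) ^ k) :=
          log_le_log (by exact_mod_cast h) (by exact_mod_cast Nat.choose_le_pow m k)
      _ = k * log m := log_pow m k

lemma inv_rpow_mul_exp_le {B k q δ : ℝ} (hB : 0 < B) (hk : 0 ≤ k) (hq : 0 < q)
    (hlog : log B ≤ k * (q * δ) ^ 2 / 2) :
    B⁻¹ ^ (1 - q⁻¹) * exp ((q - 1) / 2 * (k * δ ^ 2)) ≤ exp (δ * k * (q * δ)) / B := by
  have hrhs : exp (δ * k * (q * δ)) / B = exp (δ * k * (q * δ) - log B) := by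
    rw [exp_sub, exp_log hB]
  rw [rpow_def_of_pos (inv_pos.mpr hB), log_inv, ← exp_add, hrhs, exp_le_exp]
  have hlogq : log B * q⁻¹ ≤ k * q * δ ^ 2 / 2 := by
    rw [← div_eq_mul_inv, div_le_iff₀ hq]
    linarith
  linarith [mul_nonneg hk (sq_nonneg δ)]

lemma one_le_exp_mul_div {B k s δ : ℝ} (hB : 0 < B) (hk : 0 ≤ k) (hs : 0 ≤ s) (hsδ : s ≤ δ)
    (hlog : log B ≤ k * s ^ 2 / 2) :
    1 ≤ exp (δ * k * s) / B := by
  rw [one_le_div hB, ← exp_log hB, exp_le_exp]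
  linarith [mul_nonneg (mul_nonneg hk hs) (sub_nonneg.mpr hsδ), mul_nonneg hk (sq_nonneg s)]

/-- Let `X_1,…,X_k ∼ N(δ,1)` and `X_{k+1},…,X_m ∼ N(0,1)` be independent, and let
`f(δ) = P[X_i > X_j for all i ∈ [k], j ∈ [m]∖[k]]`.  Then
`f(δ) ≤ exp(δ k √(2 log m)) / binom(m,k)`. -/
theorem gaussian_shifted_topk_probability (m k : ℕ) (hk : k ≤ m) (δ : ℝ) (hδ : 0 < δ) :
    (Measure.pi fun i : Fin m => gaussianReal (if (i : ℕ) < k then δ else 0) 1)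
        {x | ∀ i : Fin m, (i : ℕ) < k → ∀ j : Fin m, k ≤ (j : ℕ) → x j < x i} ≤
      ENNReal.ofReal
        (Real.exp (δ * k * Real.sqrt (2 * Real.log m)) / m.choose k) := by
  set s := √(2 * log m)
  set K := univ.filter fun i : Fin m => (i : ℕ) < k
  have hA : {x : Fin m → ℝ | ∀ i : Fin m, (i : ℕ) < k → ∀ j : Fin m, k ≤ (j : ℕ) → x j < x i}
      = topEvent K := by
    ext x
    simp [topEvent, K]
  have hmem : ∀ i : Fin m, (i : ℕ) < k ↔ i ∈ K := by simp [K]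
  have hB : (0 : ℝ) < m.choose k := by exact_mod_cast Nat.choose_pos hk
  have hlog : log (m.choose k) ≤ k * s ^ 2 / 2 := by
    rw [sq_sqrt (by positivity)]
    linarith [log_choose_le_mul_log m k]
  rw [hA]
  simp_rw [hmem]
  rcases le_or_gt s δ with hsδ | hδs
  · exact prob_le_one.trans <| ENNReal.one_le_ofReal.mpr <|
      one_le_exp_mul_div hB k.cast_nonneg (sqrt_nonneg _) hsδ hlog
  set q := s / δ
  have hq : 1 < q := (one_lt_div hδ).mpr hδs
  have hs : s = q * δ := (div_mul_cancel₀ s hδ.ne').symm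
  refine (pi_gaussianReal_topEvent_le K δ hq).trans (ENNReal.ofReal_le_ofReal ?_)
  rw [hs] at hlog ⊢
  rw [Fintype.card_fin, show #K = k by simp [K, Fin.card_filter_val_lt, hk]]
  exact inv_rpow_mul_exp_le hB k.cast_nonneg (by positivity) hlog
end

section
/- There exist sufficiently small universal constants c, c' > 0 such that for all integers m, k, p with m ≥ 2k, if p ≤ c · binom(m,k)^{0.99}, then p ≤ (1/1000) · binom(m,k) / (binom(m, ⌊c'·k⌋) · binom(k, ⌊c'·k⌋)). -/
open Real


-- (1+1/t)^t ≤ 3, in the form (t+1)^t ≤ 3 * t^t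
lemma aux_succ_pow (t : ℕ) : ((t:ℝ) + 1) ^ t ≤ 3 * (t:ℝ) ^ t := by
  rcases Nat.eq_zero_or_pos t with h | h
  · simp [h]
  have ht : (0:ℝ) < t := by exact_mod_cast h
  have h1 : ((t:ℝ) + 1) = (1 + 1/t) * t := by field_simp
  have h2 : (1 + 1/(t:ℝ)) ^ t ≤ 3 := by
    have := Real.add_one_le_exp (1/(t:ℝ))
    calc (1 + 1/(t:ℝ)) ^ t ≤ (Real.exp (1/t)) ^ t := by
          apply pow_le_pow_left₀ (by positivity) (by linarith)
      _ = Real.exp (t * (1/t)) := by rw [Real.exp_nat_mul]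
      _ = Real.exp 1 := by rw [mul_one_div, div_self ht.ne']
      _ ≤ 3 := by linarith [Real.exp_one_lt_d9]
  calc ((t:ℝ)+1)^t = (1 + 1/(t:ℝ))^t * (t:ℝ)^t := by rw [h1, mul_pow]
    _ ≤ 3 * (t:ℝ)^t := by
        apply mul_le_mul_of_nonneg_right h2 (by positivity)

-- t^t ≤ 3^t * t!
lemma aux_fact (t : ℕ) : (t:ℝ) ^ t ≤ 3 ^ t * (t.factorial : ℝ) := by
  induction t with
  | zero => norm_num
  | succ t ih =>
    push_cast
    have h := aux_succ_pow t
    have h3 : (0:ℝ) < 3 ^ t := by positivity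
    calc ((t:ℝ)+1) ^ (t+1) = ((t:ℝ)+1)^t * ((t:ℝ)+1) := by ring
      _ ≤ 3 * (t:ℝ)^t * ((t:ℝ)+1) := by
          apply mul_le_mul_of_nonneg_right h (by positivity)
      _ ≤ 3 * (3^t * t.factorial) * ((t:ℝ)+1) := by
          apply mul_le_mul_of_nonneg_right (mul_le_mul_of_nonneg_left ih (by norm_num)) (by positivity)
      _ = 3^(t+1) * ((t+1) * t.factorial : ℕ) := by push_cast; ring
      _ = 3^(t+1) * ((t+1).factorial : ℝ) := by rw [Nat.factorial_succ]

-- (m/k)^k ≤ choose m k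
lemma aux_ratio : ∀ (k m : ℕ), k ≤ m → ((m:ℝ)/k) ^ k ≤ (m.choose k : ℝ) := by
  intro k
  induction k with
  | zero => intro m _; simp
  | succ k ih =>
    intro m hm
    obtain ⟨n, rfl⟩ : ∃ n, m = n + 1 := ⟨m - 1, by omega⟩
    have hkn : k ≤ n := by omega
    have hid : ((n+1).choose (k+1) : ℝ) = ((n:ℝ)+1)/((k:ℝ)+1) * (n.choose k : ℝ) := by
      have := Nat.add_one_mul_choose_eq n k
      have h' : ((n+1) * n.choose k : ℕ) = ((n+1).choose (k+1) * (k+1) : ℕ) := this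
      have hc : (((n+1) * n.choose k : ℕ) : ℝ) = (((n+1).choose (k+1) * (k+1) : ℕ) : ℝ) := by
        exact_mod_cast congrArg (Nat.cast : ℕ → ℝ) h'
      push_cast at hc
      field_simp
      linarith [hc]
    have hratio : ((n:ℝ)+1)/((k:ℝ)+1) ≤ (n:ℝ)/(k:ℝ) ∨ k = 0 := by
      rcases Nat.eq_zero_or_pos k with h | h
      · right; exact h
      · left
        rw [div_le_div_iff₀ (by positivity) (by exact_mod_cast h)]
        have : (k:ℝ) ≤ n := by exact_mod_cast hkn
        nlinarith [this]
    have hpow : (((n:ℝ)+1)/((k:ℝ)+1)) ^ k ≤ ((n:ℝ)/(k:ℝ)) ^ k := by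
      rcases hratio with h | h
      · exact pow_le_pow_left₀ (by positivity) h k
      · simp [h]
    push_cast
    calc (((n:ℝ)+1)/((k:ℝ)+1)) ^ (k+1)
        = ((n:ℝ)+1)/((k:ℝ)+1) * (((n:ℝ)+1)/((k:ℝ)+1))^k := by ring
      _ ≤ ((n:ℝ)+1)/((k:ℝ)+1) * ((n:ℝ)/(k:ℝ))^k := by
          apply mul_le_mul_of_nonneg_left hpow (by positivity)
      _ ≤ ((n:ℝ)+1)/((k:ℝ)+1) * (n.choose k : ℝ) := by
          apply mul_le_mul_of_nonneg_left (ih n hkn) (by positivity)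
      _ = ((n+1).choose (k+1) : ℝ) := hid.symm
    -- cast fix

lemma aux_choose_upper (m t : ℕ) (ht : 0 < t) : (m.choose t : ℝ) ≤ (3*m/t)^t := by
  have htR : (0:ℝ) < t := by exact_mod_cast ht
  have h1 : (m.choose t : ℝ) ≤ (m:ℝ)^t / t.factorial := by
    simpa using Nat.choose_le_pow_div t m
  have hf : (0:ℝ) < t.factorial := by exact_mod_cast t.factorial_pos
  have h2 : (m:ℝ)^t / t.factorial ≤ 3^t * (m:ℝ)^t / (t:ℝ)^t := by
    rw [div_le_div_iff₀ hf (by positivity)]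
    have := aux_fact t
    nlinarith [pow_nonneg (Nat.cast_nonneg m : (0:ℝ) ≤ m) t, aux_fact t]
  calc (m.choose t : ℝ) ≤ (m:ℝ)^t / t.factorial := h1
    _ ≤ 3^t * (m:ℝ)^t / (t:ℝ)^t := h2
    _ = (3*m/t)^t := by rw [div_pow, mul_pow]

lemma key (m k : ℕ) (hm : 2*k ≤ m) :
    ((m.choose ⌊(1/10000:ℝ) * k⌋₊ : ℝ) * (k.choose ⌊(1/10000:ℝ) * k⌋₊ : ℝ))^200
      ≤ (m.choose k : ℝ) := by
  set t := ⌊(1/10000:ℝ) * k⌋₊ with htdef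
  have hkm : k ≤ m := by omega
  have hN1 : (1:ℝ) ≤ m.choose k := by exact_mod_cast Nat.one_le_iff_ne_zero.mpr (Nat.choose_pos hkm).ne'
  rcases lt_or_ge k 10000 with hk | hk
  · have ht0 : t = 0 := by
      rw [htdef, Nat.floor_eq_zero]
      rw [div_mul_eq_mul_div, div_lt_one (by norm_num)]
      push_cast; exact_mod_cast by exact_mod_cast (by push_cast; linarith [show (k:ℝ) < 10000 from by exact_mod_cast hk] : (1:ℝ)*k < 10000)
    simp [ht0, hN1]
  · -- k ≥ 10000
    have hkpos : 0 < k := by omega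
    have hkR : (0:ℝ) < k := by exact_mod_cast hkpos
    have ht1 : 1 ≤ t := by
      rw [htdef]
      apply Nat.le_floor
      rw [Nat.cast_one]
      rw [div_mul_eq_mul_div, le_div_iff₀ (by norm_num)]
      push_cast
      linarith [show (10000:ℝ) ≤ k from by exact_mod_cast hk]
    have htpos : (0:ℝ) < t := by exact_mod_cast ht1
    have ht_le : (t:ℝ) ≤ (k:ℝ)/10000 := by
      have := Nat.floor_le (show (0:ℝ) ≤ (1/10000:ℝ)*k by positivity)
      rw [← htdef] at this; linarith
    have htk : (k:ℝ) < 10000*t + 10000 := by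
      have := Nat.lt_floor_add_one ((1/10000:ℝ)*k)
      rw [← htdef] at this
      nlinarith
    have ht1R : (1:ℝ) ≤ t := by exact_mod_cast ht1
    have hk20 : (k:ℝ) ≤ 20000*t := by nlinarith
    have h6600 : 6600*t ≤ k := by
      have : (10000:ℝ)*t ≤ k := by linarith
      have h10 : 10000*t ≤ k := by exact_mod_cast this
      omega
    have htk' : t ≤ k := by
      have : (t:ℝ) ≤ k := by linarith
      exact_mod_cast this
    set x : ℝ := (m:ℝ)/k with hxdef
    have hx2 : 2 ≤ x := by
      rw [hxdef, le_div_iff₀ hkR]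
      exact_mod_cast hm
    have hx0 : 0 < x := by linarith
    have hx16 : (3*(k:ℝ)/t) ≤ x^16 := by
      have h1 : 3*(k:ℝ)/t ≤ 60000 := by
        rw [div_le_iff₀ htpos]; nlinarith
      have h2 : (2:ℝ)^16 ≤ x^16 := pow_le_pow_left₀ (by norm_num) hx2 16
      norm_num at h2 ⊢; linarith
    have hsplit : 3*(m:ℝ)/t = x * (3*(k:ℝ)/t) := by
      rw [hxdef]; field_simp
    have hmt : (m.choose t : ℝ) ≤ x^(17*t) := by
      calc (m.choose t : ℝ) ≤ (3*(m:ℝ)/t)^t := aux_choose_upper m t ht1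
        _ = (x * (3*(k:ℝ)/t))^t := by rw [hsplit]
        _ = x^t * (3*(k:ℝ)/t)^t := mul_pow _ _ _
        _ ≤ x^t * (x^16)^t := by
            apply mul_le_mul_of_nonneg_left _ (by positivity)
            exact pow_le_pow_left₀ (by positivity) hx16 t
        _ = x^(17*t) := by rw [← pow_mul, ← pow_add]; ring_nf
    have hkt : (k.choose t : ℝ) ≤ x^(16*t) := by
      calc (k.choose t : ℝ) ≤ (3*(k:ℝ)/t)^t := aux_choose_upper k t ht1
        _ ≤ (x^16)^t := pow_le_pow_left₀ (by positivity) hx16 t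
        _ = x^(16*t) := by rw [← pow_mul]
    have hD : (m.choose t : ℝ) * (k.choose t : ℝ) ≤ x^(33*t) := by
      calc (m.choose t : ℝ) * (k.choose t : ℝ) ≤ x^(17*t) * x^(16*t) := by
            apply mul_le_mul hmt hkt (by positivity) (by positivity)
        _ = x^(33*t) := by rw [← pow_add]; ring_nf
    calc ((m.choose t : ℝ) * (k.choose t : ℝ))^200 ≤ (x^(33*t))^200 := by
          apply pow_le_pow_left₀ (by positivity) hD
      _ = x^(6600*t) := by rw [← pow_mul]; ring_nf
      _ ≤ x^k := pow_le_pow_right₀ (by linarith) h6600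
      _ ≤ (m.choose k : ℝ) := by
          have := aux_ratio k m hkm
          rw [← hxdef] at this; exact this
noncomputable section

/-- There are sufficiently small universal constants `c, c' > 0` such that for `m ≥ 2k`,
`p ≤ c binom(m,k)^{0.99}` implies
`p ≤ (1/1000) binom(m,k) / (binom(m,⌊c'k⌋) binom(k,⌊c'k⌋))`. -/
theorem binomial_configuration_count_bound :
    ∃ c c' : ℝ, 0 < c ∧ 0 < c' ∧
      ∀ m k p : ℕ, m ≥ 2 * k →
        (p : ℝ) ≤ c * (m.choose k : ℝ) ^ (0.99 : ℝ) →
        (p : ℝ) ≤ (1 / 1000) * (m.choose k : ℝ) /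
          ((m.choose ⌊c' * (k : ℝ)⌋₊ : ℝ) * (k.choose ⌊c' * (k : ℝ)⌋₊ : ℝ)) := by
  refine ⟨1/1000, 1/10000, by norm_num, by norm_num, fun m k p hm hp => ?_⟩
  set t := ⌊(1/10000:ℝ) * k⌋₊ with htdef
  have hkm : k ≤ m := by omega
  have htk : t ≤ k := by
    rw [htdef]
    calc ⌊(1/10000:ℝ) * k⌋₊ ≤ ⌊(k:ℝ)⌋₊ := by
          apply Nat.floor_le_floor; nlinarith [Nat.cast_nonneg (α := ℝ) k]
      _ = k := Nat.floor_natCast k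
  set D : ℝ := (m.choose t : ℝ) * (k.choose t : ℝ) with hDdef
  set N : ℝ := (m.choose k : ℝ) with hNdef
  have hN1 : (1:ℝ) ≤ N := by
    rw [hNdef]; exact_mod_cast Nat.one_le_iff_ne_zero.mpr (Nat.choose_pos hkm).ne'
  have hN0 : (0:ℝ) < N := by linarith
  have hD1 : (1:ℝ) ≤ D := by
    rw [hDdef]
    have h1 : (1:ℝ) ≤ (m.choose t : ℝ) :=
      by exact_mod_cast Nat.one_le_iff_ne_zero.mpr (Nat.choose_pos (htk.trans hkm)).ne'
    have h2 : (1:ℝ) ≤ (k.choose t : ℝ) :=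
      by exact_mod_cast Nat.one_le_iff_ne_zero.mpr (Nat.choose_pos htk).ne'
    nlinarith
  have hD0 : (0:ℝ) < D := by linarith
  have hkey : D ^ (200:ℕ) ≤ N := key m k hm
  have hDle : D ≤ N ^ (0.005:ℝ) := by
    have h := Real.rpow_le_rpow (by positivity) hkey (by norm_num : (0:ℝ) ≤ 1/200)
    rw [← Real.rpow_natCast D 200, ← Real.rpow_mul hD0.le] at h
    norm_num at h
    try exact h
    try { norm_num; exact h }
  have hfrac : N ^ (0.99:ℝ) ≤ N / D := by
    have h1 : N ^ (0.99:ℝ) ≤ N ^ (0.995:ℝ) :=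
      Real.rpow_le_rpow_of_exponent_le hN1 (by norm_num)
    have h2 : N ^ (0.995:ℝ) = N / N ^ (0.005:ℝ) := by
      rw [eq_div_iff (by positivity), ← Real.rpow_add hN0]
      norm_num
    have h3 : N / N ^ (0.005:ℝ) ≤ N / D := by
      apply div_le_div_of_nonneg_left hN0.le hD0 hDle
    linarith
  calc (p:ℝ) ≤ 1/1000 * N ^ (0.99:ℝ) := hp
    _ ≤ 1/1000 * (N / D) := by linarith
    _ = 1/1000 * N / D := by ring

end
end

section
/- For any t > 0, any integers n ≤ d, and any p ∈ ℝ^d, if x is drawn uniformly from the unit ball B_d = {x ∈ ℝ^d : ‖x‖₂ ≤ 1}, then the probability that x ∈ p + ([−t/√d, t/√d]^n × ℝ^{d−n}) is at most 2^{−d+1} + (8t)^n. -/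
open MeasureTheory
open scoped ENNReal NNReal
open Real

noncomputable section

/-- The Euclidean unit ball in `ℝ^d`. -/
def unitBall (d : ℕ) : Set (Fin d → ℝ) := {x | ∑ i, (x i) ^ 2 ≤ 1}

/-- The uniform probability measure on the Euclidean unit ball of `ℝ^d`. -/
def uniformBall (d : ℕ) : Measure (Fin d → ℝ) :=
  (volume (unitBall d))⁻¹ • volume.restrict (unitBall d)

lemma gamma_half_step {x : ℝ} (hx : 0 < x) :
    Real.Gamma (x + 1/2) ≤ Real.sqrt x * Real.Gamma x := by
  have hx1 : (0:ℝ) < x + 1 := by linarith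
  have h := Real.convexOn_log_Gamma.2 (Set.mem_Ioi.mpr hx) (Set.mem_Ioi.mpr hx1)
    (by norm_num : (0:ℝ) ≤ 1/2) (by norm_num : (0:ℝ) ≤ 1/2) (by norm_num)
  have hmid : (1/2 : ℝ) • x + (1/2 : ℝ) • (x+1) = x + 1/2 := by
    simp [smul_eq_mul]; ring
  rw [hmid] at h
  simp only [Function.comp_apply, smul_eq_mul] at h
  rw [Real.Gamma_add_one hx.ne', Real.log_mul hx.ne' (Real.Gamma_pos_of_pos hx).ne'] at h
  have h2 : Real.log (Real.Gamma (x + 1/2)) ≤ Real.log (Real.sqrt x * Real.Gamma x) := by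
    rw [Real.log_mul (Real.sqrt_pos.mpr hx).ne' (Real.Gamma_pos_of_pos hx).ne',
      Real.log_sqrt hx.le]
    linarith
  have := Real.exp_le_exp.mpr h2
  rwa [Real.exp_log (Real.Gamma_pos_of_pos (by linarith)),
    Real.exp_log (by positivity)] at this

lemma vol_ball_pi (ι : Type*) [Fintype ι] :
    volume {x : ι → ℝ | ∑ i, x i ^ 2 ≤ 1} =
      ENNReal.ofReal (Real.sqrt π ^ (Fintype.card ι) /
        Real.Gamma (Fintype.card ι / 2 + 1)) := by
  rcases isEmpty_or_nonempty ι with h | h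
  · have hs : {x : ι → ℝ | ∑ i, x i ^ 2 ≤ 1} = Set.univ := by
      ext x; simp
    rw [hs, Fintype.card_eq_zero]
    simp [Real.Gamma_one, MeasureTheory.volume_pi, Measure.pi_univ]
  · have hs : {x : ι → ℝ | ∑ i, x i ^ 2 ≤ 1} =
        {x : ι → ℝ | (∑ i, |x i| ^ (2:ℝ)) ^ ((1:ℝ)/2) ≤ 1} := by
      ext x
      have he : ∀ i, |x i| ^ (2:ℝ) = x i ^ 2 := by
        intro i
        rw [show (2:ℝ) = ((2:ℕ):ℝ) by norm_num, Real.rpow_natCast, sq_abs]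
      simp only [Set.mem_setOf_eq, he]
      rw [← Real.sqrt_eq_rpow]
      constructor
      · intro hle
        calc Real.sqrt (∑ i, x i ^ 2) ≤ Real.sqrt 1 := Real.sqrt_le_sqrt hle
        _ = 1 := Real.sqrt_one
      · intro hle
        have h0 : (0:ℝ) ≤ ∑ i, x i ^ 2 := by positivity
        nlinarith [Real.sq_sqrt h0, Real.sqrt_nonneg (∑ i, x i ^ 2)]
    rw [hs, MeasureTheory.volume_sum_rpow_le ι (by norm_num : (1:ℝ) ≤ 2) 1]
    rw [show (2 : ℝ) * Real.Gamma (1/2 + 1) = Real.sqrt π by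
      rw [Real.Gamma_add_one (by norm_num), Real.Gamma_one_half_eq]; ring]
    simp

lemma gamma_ratio (d : ℕ) (hd : 1 ≤ d) : ∀ n : ℕ, n ≤ d →
    Real.Gamma ((d:ℝ)/2 + 1) ≤
      Real.sqrt d ^ n * Real.Gamma (((d - n : ℕ):ℝ)/2 + 1) := by
  intro n
  induction n with
  | zero => intro _; simp
  | succ k ih =>
    intro hk
    have hk' : k ≤ d := by omega
    have hcast : ((d - k : ℕ):ℝ) = ((d - (k+1) : ℕ):ℝ) + 1 := by
      push_cast [Nat.cast_sub hk', Nat.cast_sub hk]; ring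
    have hx : (0:ℝ) < ((d - (k+1) : ℕ):ℝ)/2 + 1 := by positivity
    have hstep : Real.Gamma (((d - k : ℕ):ℝ)/2 + 1) ≤
        Real.sqrt d * Real.Gamma (((d - (k+1) : ℕ):ℝ)/2 + 1) := by
      have harg : ((d - k : ℕ):ℝ)/2 + 1 = (((d - (k+1) : ℕ):ℝ)/2 + 1) + 1/2 := by
        rw [hcast]; ring
      rw [harg]
      refine (gamma_half_step hx).trans ?_
      have hle : ((d - (k+1) : ℕ):ℝ)/2 + 1 ≤ d := by
        have h1 : ((d - (k+1) : ℕ):ℝ) ≤ (d:ℝ) - 1 := by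
          have : (d - (k+1) : ℕ) ≤ d - 1 := by omega
          calc ((d - (k+1) : ℕ):ℝ) ≤ ((d - 1 : ℕ):ℝ) := by exact_mod_cast this
          _ = (d:ℝ) - 1 := by push_cast [Nat.cast_sub hd]; ring
        have hd1 : (1:ℝ) ≤ d := by exact_mod_cast hd
        linarith
      exact mul_le_mul_of_nonneg_right (Real.sqrt_le_sqrt hle)
        (Real.Gamma_pos_of_pos hx).le
    calc Real.Gamma ((d:ℝ)/2 + 1) ≤ Real.sqrt d ^ k * Real.Gamma (((d - k : ℕ):ℝ)/2 + 1) :=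
        ih hk'
      _ ≤ Real.sqrt d ^ k * (Real.sqrt d * Real.Gamma (((d - (k+1) : ℕ):ℝ)/2 + 1)) :=
        mul_le_mul_of_nonneg_left hstep (by positivity)
      _ = Real.sqrt d ^ (k+1) * Real.Gamma (((d - (k+1) : ℕ):ℝ)/2 + 1) := by ring

/-- Tube volumes in the uniform ball: for `t > 0`, `n ≤ d` and `p ∈ ℝ^d`, the probability
that a uniform point of the unit ball lies in
`p + ([−t/√d, t/√d]^n × ℝ^{d−n})` is at most `2^{−d+1} + (8t)^n`. -/
theorem tube_volume_uniform_ball (d n : ℕ) (hn : n ≤ d) (t : ℝ) (ht : 0 < t)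
    (p : Fin d → ℝ) :
    uniformBall d
        {x | ∀ i : Fin d, (i : ℕ) < n →
          x i - p i ∈ Set.Icc (-(t / Real.sqrt d)) (t / Real.sqrt d)} ≤
      ENNReal.ofReal ((2 : ℝ) ^ (-(d : ℝ) + 1) + (8 * t) ^ n) := by
  classical
  set S := {x : Fin d → ℝ | ∀ i : Fin d, (i : ℕ) < n →
      x i - p i ∈ Set.Icc (-(t / Real.sqrt d)) (t / Real.sqrt d)} with hS
  have hBm : MeasurableSet (unitBall d) := by
    apply measurableSet_le _ measurable_const
    exact Finset.measurable_sum _ fun i _ => (measurable_pi_apply i).pow_const 2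
  set v : ℝ := Real.sqrt π ^ d / Real.Gamma ((d:ℝ)/2 + 1) with hv
  have hΓd : (0:ℝ) < Real.Gamma ((d:ℝ)/2 + 1) := Real.Gamma_pos_of_pos (by positivity)
  have hv0 : 0 < v := by positivity
  have hVolB : volume (unitBall d) = ENNReal.ofReal v := by
    have := vol_ball_pi (Fin d)
    simpa [Fintype.card_fin, unitBall] using this
  have hVne : ENNReal.ofReal v ≠ 0 := by
    simp [ENNReal.ofReal_eq_zero, not_le, hv0]
  have hEq : uniformBall d S = (ENNReal.ofReal v)⁻¹ * volume (S ∩ unitBall d) := by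
    rw [uniformBall, hVolB, Measure.smul_apply, smul_eq_mul, Measure.restrict_apply' hBm]
  have hrpos : (0:ℝ) < (2 : ℝ) ^ (-(d : ℝ) + 1) := Real.rpow_pos_of_pos (by norm_num) _
  rcases Nat.eq_zero_or_pos n with hn0 | hnpos
  · subst hn0
    rw [hEq]
    have h1 : volume (S ∩ unitBall d) ≤ ENNReal.ofReal v := by
      rw [← hVolB]; exact measure_mono Set.inter_subset_right
    calc (ENNReal.ofReal v)⁻¹ * volume (S ∩ unitBall d)
        ≤ (ENNReal.ofReal v)⁻¹ * ENNReal.ofReal v := mul_le_mul_right h1 _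
      _ = 1 := ENNReal.inv_mul_cancel hVne ENNReal.ofReal_ne_top
      _ ≤ ENNReal.ofReal ((2 : ℝ) ^ (-(d : ℝ) + 1) + (8 * t) ^ 0) := by
          rw [ENNReal.one_le_ofReal]; simp; linarith
  · have hd : 1 ≤ d := le_trans hnpos hn
    have hsd : (0:ℝ) < Real.sqrt d := Real.sqrt_pos.mpr (by exact_mod_cast hd)
    set q : Fin d → Prop := fun i => (i:ℕ) < n with hq
    set A : Set ({i : Fin d // q i} → ℝ) :=
      Set.univ.pi (fun i => Set.Icc (p i.1 - t / Real.sqrt d) (p i.1 + t / Real.sqrt d)) with hA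
    set Bs : Set ({i : Fin d // ¬ q i} → ℝ) := {y | ∑ j, y j ^ 2 ≤ 1} with hBs
    have hcard1 : Fintype.card {i : Fin d // q i} = n := by
      have e : Fin n ≃ {i : Fin d // q i} :=
        ⟨fun j => ⟨⟨j.1, lt_of_lt_of_le j.2 hn⟩, j.2⟩, fun i => ⟨i.1.1, i.2⟩,
          fun j => rfl, fun i => rfl⟩
      rw [← Fintype.card_congr e, Fintype.card_fin]
    have hcard2 : Fintype.card {i : Fin d // ¬ q i} = d - n := by
      rw [Fintype.card_subtype_compl, Fintype.card_fin, hcard1]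
    have hAmes : MeasurableSet A := MeasurableSet.univ_pi fun i => measurableSet_Icc
    have hBsmes : MeasurableSet Bs := by
      apply measurableSet_le _ measurable_const
      exact Finset.measurable_sum _ fun i _ => (measurable_pi_apply i).pow_const 2
    have hsub : S ∩ unitBall d ⊆
        (MeasurableEquiv.piEquivPiSubtypeProd (fun _ : Fin d => ℝ) q) ⁻¹' (A ×ˢ Bs) := by
      rintro x ⟨hxS, hxB⟩
      constructor
      · intro i _
        have h := hxS i.1 i.2
        simp only [Set.mem_Icc] at h
        show x i.1 ∈ Set.Icc (p i.1 - t / Real.sqrt d) (p i.1 + t / Real.sqrt d)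
        exact Set.mem_Icc.mpr ⟨by linarith [h.1], by linarith [h.2]⟩
      · have hsum : ∑ j : {i : Fin d // ¬ q i}, (x j.1) ^ 2 ≤ ∑ i, x i ^ 2 := by
          rw [← Finset.sum_subtype (Finset.univ.filter fun i => ¬ q i)
            (fun i => by simp) (fun i => x i ^ 2)]
          exact Finset.sum_le_sum_of_subset_of_nonneg (Finset.filter_subset _ _)
            (fun i _ _ => sq_nonneg _)
        exact le_trans hsum hxB
    have hmp := MeasureTheory.volume_preserving_piEquivPiSubtypeProd
      (fun _ : Fin d => ℝ) q
    have hTvol : volume ((MeasurableEquiv.piEquivPiSubtypeProd (fun _ : Fin d => ℝ) q) ⁻¹'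
        (A ×ˢ Bs)) = volume A * volume Bs := by
      rw [hmp.measure_preimage (hAmes.prod hBsmes).nullMeasurableSet, Measure.volume_eq_prod,
        Measure.prod_prod]
    have hAvol : volume A = ENNReal.ofReal (2 * (t / Real.sqrt d)) ^ n := by
      rw [hA, volume_pi_pi]
      have : ∀ i : {i : Fin d // q i},
          volume (Set.Icc (p i.1 - t / Real.sqrt d) (p i.1 + t / Real.sqrt d)) =
            ENNReal.ofReal (2 * (t / Real.sqrt d)) := by
        intro i; rw [Real.volume_Icc]; ring_nf
      simp_rw [this]
      rw [Finset.prod_const, Finset.card_univ, hcard1]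
    have hBvol : volume Bs = ENNReal.ofReal
        (Real.sqrt π ^ (d - n) / Real.Gamma (((d - n : ℕ):ℝ)/2 + 1)) := by
      rw [hBs, vol_ball_pi, hcard2]
    have hΓm : (0:ℝ) < Real.Gamma (((d - n : ℕ):ℝ)/2 + 1) :=
      Real.Gamma_pos_of_pos (by positivity)
    -- the key real inequality
    have hreal : (2 * (t / Real.sqrt d)) ^ n *
        (Real.sqrt π ^ (d - n) / Real.Gamma (((d - n : ℕ):ℝ)/2 + 1)) ≤
        (8 * t) ^ n * v := by
      rw [hv, show (2 * (t / Real.sqrt d)) ^ n *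
          (Real.sqrt π ^ (d - n) / Real.Gamma (((d - n : ℕ):ℝ)/2 + 1)) =
          ((2 * (t / Real.sqrt d)) ^ n * Real.sqrt π ^ (d - n)) /
            Real.Gamma (((d - n : ℕ):ℝ)/2 + 1) from by ring,
        show (8 * t) ^ n * (Real.sqrt π ^ d / Real.Gamma ((d:ℝ)/2 + 1)) =
          ((8 * t) ^ n * Real.sqrt π ^ d) / Real.Gamma ((d:ℝ)/2 + 1) from by ring,
        div_le_div_iff₀ hΓm hΓd]
      have hΓ := gamma_ratio d hd n hn
      have hpow : (2 * (t / Real.sqrt d)) ^ n * Real.sqrt d ^ n = (2 * t) ^ n := by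
        rw [← mul_pow]; congr 1; field_simp
      have hsπ : (1:ℝ) ≤ Real.sqrt π := by
        rw [show (1:ℝ) = Real.sqrt 1 by simp]
        exact Real.sqrt_le_sqrt (by linarith [Real.pi_gt_three])
      have h3 : (2 * t) ^ n * Real.sqrt π ^ (d - n) ≤
          (8 * t) ^ n * Real.sqrt π ^ d := by
        have hdd : Real.sqrt π ^ d = Real.sqrt π ^ (d - n) * Real.sqrt π ^ n := by
          rw [← pow_add]; congr 1; omega
        calc (2 * t) ^ n * Real.sqrt π ^ (d - n)
            ≤ (8 * t * Real.sqrt π) ^ n * Real.sqrt π ^ (d - n) := by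
              refine mul_le_mul_of_nonneg_right (pow_le_pow_left₀ (by linarith) ?_ n) (by positivity)
              nlinarith
          _ = (8 * t) ^ n * Real.sqrt π ^ d := by rw [mul_pow, hdd]; ring
      calc (2 * (t / Real.sqrt d)) ^ n * Real.sqrt π ^ (d - n) * Real.Gamma ((d:ℝ)/2 + 1)
          ≤ (2 * (t / Real.sqrt d)) ^ n * Real.sqrt π ^ (d - n) *
            (Real.sqrt d ^ n * Real.Gamma (((d - n : ℕ):ℝ)/2 + 1)) :=
            mul_le_mul_of_nonneg_left hΓ (by positivity)
        _ = ((2 * (t / Real.sqrt d)) ^ n * Real.sqrt d ^ n) * Real.sqrt π ^ (d - n) *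
            Real.Gamma (((d - n : ℕ):ℝ)/2 + 1) := by ring
        _ = (2 * t) ^ n * Real.sqrt π ^ (d - n) * Real.Gamma (((d - n : ℕ):ℝ)/2 + 1) := by
            rw [hpow]
        _ ≤ (8 * t) ^ n * Real.sqrt π ^ d * Real.Gamma (((d - n : ℕ):ℝ)/2 + 1) :=
            mul_le_mul_of_nonneg_right h3 hΓm.le
    -- put everything together
    rw [hEq]
    have hstep : volume (S ∩ unitBall d) ≤
        ENNReal.ofReal ((2 * (t / Real.sqrt d)) ^ n *
          (Real.sqrt π ^ (d - n) / Real.Gamma (((d - n : ℕ):ℝ)/2 + 1))) := by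
      refine le_trans (measure_mono hsub) ?_
      rw [hTvol, hAvol, hBvol,
        ← ENNReal.ofReal_pow (by positivity : (0:ℝ) ≤ 2 * (t / Real.sqrt d)),
        ← ENNReal.ofReal_mul (by positivity)]
    calc (ENNReal.ofReal v)⁻¹ * volume (S ∩ unitBall d)
        ≤ (ENNReal.ofReal v)⁻¹ * ENNReal.ofReal ((8 * t) ^ n * v) :=
          mul_le_mul_right (le_trans hstep (ENNReal.ofReal_le_ofReal hreal)) _
      _ = (ENNReal.ofReal v)⁻¹ * (ENNReal.ofReal ((8 * t) ^ n) * ENNReal.ofReal v) := by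
          rw [ENNReal.ofReal_mul (by positivity)]
      _ = ENNReal.ofReal ((8 * t) ^ n) := by
          rw [mul_comm (ENNReal.ofReal ((8 * t) ^ n)), ← mul_assoc,
            ENNReal.inv_mul_cancel hVne ENNReal.ofReal_ne_top, one_mul]
      _ ≤ ENNReal.ofReal ((2 : ℝ) ^ (-(d : ℝ) + 1) + (8 * t) ^ n) :=
          ENNReal.ofReal_le_ofReal (by linarith)


end
end
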